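/- Let 1 ≤ l < m be fixed integers. Then f(n−m, n−l, n) ∼ (2n)^{m−l}/(m−l)! as n → ∞; that is, the ratio f(n−m,n−l,n) · (m−l)! / (2n)^{m−l} tends to 1 as n → ∞. -/

import Mathlib

open MeasureTheory Filter Real

noncomputable section

/-- The orthogonal group O(n) of ℝⁿ. -/
abbrev OG (n : ℕ) : Type := Matrix.orthogonalGroup (Fin n) ℝ

instance (n : ℕ) : MeasurableSpace (OG n) := borel _
instance (n : ℕ) : BorelSpace (OG n) := ⟨rfl⟩

/-- The natural action of `g ∈ O(n)` on `ℝⁿ`. -/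
def act {n : ℕ} (g : OG n) (x : EuclideanSpace ℝ (Fin n)) : EuclideanSpace ℝ (Fin n) :=
  Matrix.toEuclideanLin (g : Matrix (Fin n) (Fin n) ℝ) x

/-- `E_k`: the span of the first `k` standard basis vectors of `ℝⁿ`, as a set. -/
def Ek (n k : ℕ) : Set (EuclideanSpace ℝ (Fin n)) :=
  {x | ∀ i : Fin n, k ≤ (i : ℕ) → x i = 0}

/-- The `m`-dimensional face `{x : |xᵢ| ≤ 1 for i < m, xᵢ = 1 for i ≥ m}` of the cube `[-1,1]ⁿ`. -/
def cubeFace (n m : ℕ) : Set (EuclideanSpace ℝ (Fin n)) :=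
  {x | (∀ i : Fin n, (i : ℕ) < m → |x i| ≤ 1) ∧ ∀ i : Fin n, m ≤ (i : ℕ) → x i = 1}

/-- `f(j,k,n)`, the expected number of `j`-faces of a random `k`-section of the `n`-cube,
computed with respect to the probability measure `H` on `O(n)`. -/
def expFaces (n : ℕ) (H : Measure (OG n)) (j k : ℕ) : ℝ :=
  2 ^ (k - j) * (n.choose (k - j)) *
    (H {g | (act g '' Ek n k ∩ cubeFace n (n - k + j)).Nonempty}).toReal



lemma colOrtho {n : ℕ} (g : OG n) (a b : Fin n) :
    ∑ r : Fin n, (g : Matrix (Fin n) (Fin n) ℝ) r a * (g : Matrix (Fin n) (Fin n) ℝ) r b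
      = if a = b then 1 else 0 := by
  have h : star (g : Matrix (Fin n) (Fin n) ℝ) * (g : Matrix (Fin n) (Fin n) ℝ) = 1 :=
    (Matrix.mem_unitaryGroup_iff'.mp g.2)
  have := congrFun (congrFun h a) b
  simpa [Matrix.mul_apply, Matrix.conjTranspose_apply, Matrix.one_apply] using this

lemma rowOrtho {n : ℕ} (g : OG n) (a b : Fin n) :
    ∑ c : Fin n, (g : Matrix (Fin n) (Fin n) ℝ) a c * (g : Matrix (Fin n) (Fin n) ℝ) b c
      = if a = b then 1 else 0 := by
  have h : (g : Matrix (Fin n) (Fin n) ℝ) * star (g : Matrix (Fin n) (Fin n) ℝ) = 1 :=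
    (Matrix.mem_unitaryGroup_iff.mp g.2)
  have := congrFun (congrFun h a) b
  simpa [Matrix.mul_apply, Matrix.conjTranspose_apply, Matrix.one_apply] using this

lemma entry_abs_le_one {n : ℕ} (g : OG n) (a b : Fin n) :
    |(g : Matrix (Fin n) (Fin n) ℝ) a b| ≤ 1 := by
  rw [abs_le_one_iff_mul_self_le_one]
  calc (g : Matrix (Fin n) (Fin n) ℝ) a b * (g : Matrix (Fin n) (Fin n) ℝ) a b
      ≤ ∑ r : Fin n, (g : Matrix (Fin n) (Fin n) ℝ) r b * (g : Matrix (Fin n) (Fin n) ℝ) r b := by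
        apply Finset.single_le_sum (fun r _ => mul_self_nonneg _) (Finset.mem_univ a)
    _ = 1 := by rw [colOrtho g b b]; simp

/-- permutation of rows as an element of `OG n` -/
def permOG {n : ℕ} (σ : Equiv.Perm (Fin n)) : OG n :=
  ⟨Matrix.of fun r s => if σ r = s then (1:ℝ) else 0, by
    constructor
    · ext a b
      simp only [Matrix.mul_apply, Matrix.one_apply, Matrix.star_apply, Matrix.of_apply,
        star_trivial]
      rw [Fintype.sum_equiv σ _
        (fun y => (if y = a then (1:ℝ) else 0) * if y = b then (1:ℝ) else 0) (fun x => rfl)]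
      simp [ite_and, Finset.sum_ite_eq', eq_comm]
    · ext a b
      simp only [Matrix.mul_apply, Matrix.one_apply, Matrix.star_apply, Matrix.of_apply,
        star_trivial]
      simp [ite_and, Finset.sum_ite_eq, eq_comm]⟩

lemma permOG_entry {n : ℕ} (σ : Equiv.Perm (Fin n)) (g : OG n) (r s : Fin n) :
    ((permOG σ * g : OG n) : Matrix (Fin n) (Fin n) ℝ) r s
      = (g : Matrix (Fin n) (Fin n) ℝ) (σ r) s := by
  show (Matrix.of (fun r s => if σ r = s then (1:ℝ) else 0) * (g : Matrix (Fin n) (Fin n) ℝ)) r s = _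
  simp [Matrix.mul_apply]

lemma entry_continuous {n : ℕ} (i c : Fin n) :
    Continuous (fun g : OG n => (g : Matrix (Fin n) (Fin n) ℝ) i c) :=
  ((continuous_apply c).comp ((continuous_apply i).comp continuous_subtype_val))
open MeasureTheory Filter
noncomputable section

lemma entry_sq_lintegral {n : ℕ} (hn : 0 < n) (H : Measure (OG n))
    [IsProbabilityMeasure H] [H.IsMulLeftInvariant] (i c : Fin n) :
    ∫⁻ g : OG n, ENNReal.ofReal ((g : Matrix (Fin n) (Fin n) ℝ) i c ^ 2) ∂H
      = (n : ENNReal)⁻¹ := by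
  set fsq : Fin n → OG n → ENNReal :=
    fun i' g => ENNReal.ofReal ((g : Matrix (Fin n) (Fin n) ℝ) i' c ^ 2) with hfsq
  have hmeas : ∀ i', Measurable (fsq i') := fun i' =>
    (((entry_continuous i' c).pow 2).measurable).ennreal_ofReal
  have hswap : ∀ i' : Fin n, ∫⁻ g, fsq i' g ∂H = ∫⁻ g, fsq i g ∂H := by
    intro i'
    have h := lintegral_mul_left_eq_self (μ := H) (fsq i) (permOG (Equiv.swap i i'))
    rw [← h]
    refine lintegral_congr fun g => ?_
    simp only [hfsq, permOG_entry, Equiv.swap_apply_left]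
  have hsum : ∑ i' : Fin n, ∫⁻ g, fsq i' g ∂H = 1 := by
    rw [← lintegral_finset_sum _ (fun i' _ => hmeas i')]
    have : ∀ g : OG n, ∑ i' : Fin n, fsq i' g = 1 := by
      intro g
      rw [← ENNReal.ofReal_sum_of_nonneg (fun _ _ => sq_nonneg _)]
      have : ∑ i' : Fin n, (g : Matrix (Fin n) (Fin n) ℝ) i' c ^ 2 = 1 := by
        have := colOrtho g c c
        simpa [sq] using this
      rw [this]; simp
    simp only [this]
    simp
  have hn' : ((n : ℕ) : ENNReal) ≠ 0 := by simp [hn.ne']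
  have hmul : (n : ENNReal) * ∫⁻ g, fsq i g ∂H = 1 := by
    rw [← hsum, Finset.sum_congr rfl (fun i' _ => hswap i')]
    simp [Finset.sum_const, mul_comm]
  calc ∫⁻ g, fsq i g ∂H = (n : ENNReal)⁻¹ * ((n : ENNReal) * ∫⁻ g, fsq i g ∂H) := by
        rw [← mul_assoc, ENNReal.inv_mul_cancel hn' (by simp), one_mul]
    _ = (n : ENNReal)⁻¹ := by rw [hmul, mul_one]

lemma entry_large_meas {n : ℕ} (hn : 0 < n) (H : Measure (OG n))
    [IsProbabilityMeasure H] [H.IsMulLeftInvariant] (i c : Fin n) {ε : ℝ} (hε : 0 < ε) :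
    H {g : OG n | ε ≤ |(g : Matrix (Fin n) (Fin n) ℝ) i c|}
      ≤ ENNReal.ofReal ((1 / ε ^ 2) / n) := by
  have hmeas : Measurable (fun g : OG n =>
      ENNReal.ofReal ((g : Matrix (Fin n) (Fin n) ℝ) i c ^ 2)) :=
    (((entry_continuous i c).pow 2).measurable).ennreal_ofReal
  have hcheb := mul_meas_ge_le_lintegral₀ (μ := H) hmeas.aemeasurable (ENNReal.ofReal (ε ^ 2))
  rw [entry_sq_lintegral hn H i c] at hcheb
  have hsub : {g : OG n | ε ≤ |(g : Matrix (Fin n) (Fin n) ℝ) i c|}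
      ⊆ {g : OG n | ENNReal.ofReal (ε ^ 2)
          ≤ ENNReal.ofReal ((g : Matrix (Fin n) (Fin n) ℝ) i c ^ 2)} := by
    intro g hg
    have : ε ^ 2 ≤ ((g : Matrix (Fin n) (Fin n) ℝ) i c) ^ 2 :=
      (pow_le_pow_left₀ hε.le hg 2).trans_eq (sq_abs _)
    exact ENNReal.ofReal_le_ofReal this
  have h1 : H {g : OG n | ε ≤ |(g : Matrix (Fin n) (Fin n) ℝ) i c|}
      ≤ (n : ENNReal)⁻¹ / ENNReal.ofReal (ε ^ 2) := by
    rw [ENNReal.le_div_iff_mul_le (Or.inl (ENNReal.ofReal_pos.mpr (pow_pos hε 2)).ne') (Or.inl (by simp))]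
    calc H _ * ENNReal.ofReal (ε ^ 2) = ENNReal.ofReal (ε ^ 2) * H _ := mul_comm _ _
      _ ≤ ENNReal.ofReal (ε ^ 2) * H {g : OG n | ENNReal.ofReal (ε ^ 2)
          ≤ ENNReal.ofReal ((g : Matrix (Fin n) (Fin n) ℝ) i c ^ 2)} := by
          exact mul_le_mul_right (measure_mono hsub) _
      _ ≤ (n : ENNReal)⁻¹ := hcheb
  refine h1.trans ?_
  rw [ENNReal.div_eq_inv_mul]
  have h2 : (n : ENNReal)⁻¹ = ENNReal.ofReal (1 / n) := by
    rw [ENNReal.ofReal_div_of_pos (by exact_mod_cast hn), ENNReal.ofReal_one,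
      ENNReal.ofReal_natCast, one_div]
  rw [h2, ← ENNReal.ofReal_inv_of_pos (pow_pos hε 2), ← ENNReal.ofReal_mul (by positivity)]
  apply ENNReal.ofReal_le_ofReal
  apply le_of_eq
  ring


lemma act_apply {n : ℕ} (g : OG n) (v : EuclideanSpace ℝ (Fin n)) (i : Fin n) :
    act g v i = ∑ c : Fin n, (g : Matrix (Fin n) (Fin n) ℝ) i c * v c := rfl

lemma good_subset {n l m : ℕ} (hl : 1 ≤ l) (hlm : l < m) (hmn : m ≤ n) (g : OG n)
    (hg : ∀ i c : Fin n, n - (m - l) ≤ (i : ℕ) → n - l ≤ (c : ℕ) →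
      |(g : Matrix (Fin n) (Fin n) ℝ) i c| ≤ 1 / (2 * l * ((m - l : ℕ) : ℝ))) :
    (act g '' Ek n (n - l) ∩ cubeFace n (n - (n - l) + (n - m))).Nonempty := by
  classical
  set A : Matrix (Fin n) (Fin n) ℝ := (g : Matrix (Fin n) (Fin n) ℝ) with hA
  set k' : ℕ := m - l with hk'
  set T : ℕ := n - k' with hT
  set ε : ℝ := 1 / (2 * l * (k' : ℝ)) with hε
  have hk1 : 1 ≤ k' := by omega
  have hl0 : (0:ℝ) < l := by exact_mod_cast hl
  have hk0 : (0:ℝ) < k' := by exact_mod_cast hk1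
  have hε0 : 0 < ε := by positivity
  have hnum2 : 2 * (l:ℝ) * k' * ε = 1 := by rw [hε]; field_simp
  have hlk1 : (1:ℝ) ≤ (l:ℝ) * k' := by
    calc (1:ℝ) = 1 * 1 := by ring
      _ ≤ (l:ℝ) * k' := by
        apply mul_le_mul <;> first | exact_mod_cast hl | exact_mod_cast hk1 | norm_num
  have hεhalf : ε ≤ 1/2 := by
    rw [hε]
    rw [div_le_div_iff₀ (by positivity) (by norm_num)]
    nlinarith
  have hnum1 : (l:ℝ) * k' * ε ^ 2 ≤ 1 / 4 := by
    have heq : (l:ℝ) * k' * ε ^ 2 = ε / 2 := by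
      have h := hnum2
      nlinarith [h]
    rw [heq]; linarith
  -- index sets
  set S : Finset (Fin n) := Finset.univ.filter (fun i : Fin n => T ≤ (i : ℕ)) with hS
  have hScard : S.card ≤ k' := by
    have h := Finset.card_le_card_of_injOn (fun i : Fin n => (i : ℕ) - T)
      (s := S) (t := Finset.range k')
      (by
        intro i hi
        simp only [Finset.mem_coe, hS, Finset.mem_filter] at hi
        simp only [Finset.mem_coe, Finset.mem_range]
        have := i.isLt
        omega)
      (by
        intro i hi j hj hij
        simp only [Finset.mem_coe, hS, Finset.mem_filter, Finset.mem_univ, true_and] at hi hj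
        have := i.isLt; have := j.isLt
        have hij' : (i : ℕ) - T = (j : ℕ) - T := hij
        apply Fin.ext
        omega)
    simpa using h
  have hιne : Nonempty {c : Fin n // n - l ≤ (c : ℕ)} := by
    refine ⟨⟨⟨n - 1, by omega⟩, ?_⟩⟩
    show n - l ≤ n - 1
    omega
  have hιcard : (Finset.univ : Finset {c : Fin n // n - l ≤ (c : ℕ)}).card ≤ l := by
    have h := Finset.card_le_card_of_injOn (fun c : {c : Fin n // n - l ≤ (c : ℕ)} =>
        ((c : Fin n) : ℕ) - (n - l))
      (s := Finset.univ) (t := Finset.range l)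
      (by
        intro c _
        simp only [Finset.mem_coe, Finset.mem_range]
        have := (c : Fin n).isLt
        have := c.2
        omega)
      (by
        intro c _ d _ hcd
        have := (c : Fin n).isLt; have := (d : Fin n).isLt
        have h1 := c.2; have h2 := d.2
        have hcd' : ((c : Fin n) : ℕ) - (n - l) = ((d : Fin n) : ℕ) - (n - l) := hcd
        apply Subtype.ext; apply Fin.ext
        omega)
    simpa using h
  set ι := {c : Fin n // n - l ≤ (c : ℕ)} with hι
  have hgS : ∀ i : Fin n, i ∈ S → ∀ a : ι, |A i (a : Fin n)| ≤ ε := by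
    intro i hi a
    simp only [hS, Finset.mem_filter] at hi
    exact hg i a (by omega) a.2
  set B : ι → ι → ℝ := fun a b => ∑ i ∈ S, A i (a : Fin n) * A i (b : Fin n) with hB
  set cv : ι → ℝ := fun b => ∑ i ∈ S, A i (b : Fin n) with hcv
  have hBb : ∀ a b : ι, |B a b| ≤ k' * ε ^ 2 := by
    intro a b
    calc |B a b| ≤ ∑ i ∈ S, |A i (a : Fin n) * A i (b : Fin n)| := Finset.abs_sum_le_sum_abs _ _
      _ ≤ ∑ _i ∈ S, ε ^ 2 := by
          apply Finset.sum_le_sum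
          intro i hi
          rw [abs_mul, sq]
          exact mul_le_mul (hgS i hi a) (hgS i hi b) (abs_nonneg _) hε0.le
      _ = S.card * ε ^ 2 := by rw [Finset.sum_const, nsmul_eq_mul]
      _ ≤ k' * ε ^ 2 := by
          apply mul_le_mul_of_nonneg_right _ (by positivity)
          exact_mod_cast hScard
  have hcvb : ∀ b : ι, |cv b| ≤ k' * ε := by
    intro b
    calc |cv b| ≤ ∑ i ∈ S, |A i (b : Fin n)| := Finset.abs_sum_le_sum_abs _ _
      _ ≤ ∑ _i ∈ S, ε := Finset.sum_le_sum (fun i hi => hgS i hi b)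
      _ = S.card * ε := by rw [Finset.sum_const, nsmul_eq_mul]
      _ ≤ k' * ε := by
          apply mul_le_mul_of_nonneg_right _ hε0.le
          exact_mod_cast hScard
  set f : (ι → ℝ) →ₗ[ℝ] (ι → ℝ) :=
    LinearMap.id - Matrix.toLin' (Matrix.of fun b a : ι => B a b) with hf
  have hfapp : ∀ (z : ι → ℝ) (b : ι), f z b = z b - ∑ a : ι, B a b * z a := by
    intro z b
    simp [hf, Matrix.toLin'_apply, Matrix.mulVec, dotProduct]
  have hsumb : ∀ (z : ι → ℝ) (b0 : ι), (∀ b, |z b| ≤ |z b0|) →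
      |∑ a : ι, B a b0 * z a| ≤ (1/4) * |z b0| := by
    intro z b0 hmax
    calc |∑ a : ι, B a b0 * z a| ≤ ∑ a : ι, |B a b0 * z a| := Finset.abs_sum_le_sum_abs _ _
      _ ≤ ∑ _a : ι, (k' * ε ^ 2) * |z b0| := by
          apply Finset.sum_le_sum
          intro a _
          rw [abs_mul]
          exact mul_le_mul (hBb a b0) (hmax a) (abs_nonneg _) (by positivity)
      _ = (Finset.univ : Finset ι).card * ((k' * ε ^ 2) * |z b0|) := by
          rw [Finset.sum_const, nsmul_eq_mul]
      _ ≤ l * ((k' * ε ^ 2) * |z b0|) := by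
          apply mul_le_mul_of_nonneg_right _ (by positivity)
          exact_mod_cast hιcard
      _ ≤ (1/4) * |z b0| := by
          rw [← mul_assoc, ← mul_assoc]
          exact mul_le_mul_of_nonneg_right hnum1 (abs_nonneg _)
  have hinj : Function.Injective f := by
    rw [injective_iff_map_eq_zero]
    intro z hz
    by_contra hne
    obtain ⟨b0, _, hmax⟩ := Finset.exists_max_image Finset.univ (fun b => |z b|)
      Finset.univ_nonempty
    have hmax' : ∀ b, |z b| ≤ |z b0| := fun b => hmax b (Finset.mem_univ b)
    have h0 : z b0 = ∑ a : ι, B a b0 * z a := by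
      have h := congrFun hz b0
      rw [hfapp] at h
      simp only [Pi.zero_apply] at h
      linarith
    have h1 := hsumb z b0 hmax'
    rw [← h0] at h1
    have hzb0 : |z b0| ≤ 0 := by linarith
    apply hne
    funext b
    exact abs_nonpos_iff.mp ((hmax' b).trans hzb0)
  have hsurj : Function.Surjective f := (LinearMap.injective_iff_surjective).mp hinj
  obtain ⟨z, hz⟩ := hsurj cv
  have hzb : ∀ b : ι, |z b| ≤ 2 * k' * ε := by
    obtain ⟨b0, _, hmax⟩ := Finset.exists_max_image Finset.univ (fun b => |z b|)
      Finset.univ_nonempty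
    have hmax' : ∀ b, |z b| ≤ |z b0| := fun b => hmax b (Finset.mem_univ b)
    have h0 : z b0 = cv b0 + ∑ a : ι, B a b0 * z a := by
      have h := congrFun hz b0
      rw [hfapp] at h
      linarith
    have h1 := hsumb z b0 hmax'
    have h2 : |z b0| ≤ k' * ε + (1/4) * |z b0| := by
      calc |z b0| = |cv b0 + ∑ a : ι, B a b0 * z a| := by rw [← h0]
        _ ≤ |cv b0| + |∑ a : ι, B a b0 * z a| := abs_add_le _ _
        _ ≤ k' * ε + (1/4) * |z b0| := add_le_add (hcvb b0) h1
    intro b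
    calc |z b| ≤ |z b0| := hmax' b
      _ ≤ 2 * k' * ε := by
        have hke : 0 ≤ (k':ℝ) * ε := by positivity
        linarith
  -- the point x
  set x : EuclideanSpace ℝ (Fin n) :=
    WithLp.toLp 2 (fun i : Fin n => if T ≤ (i : ℕ) then 1 else -(∑ a : ι, z a * A i (a : Fin n))) with hx
  have hxval : ∀ i : Fin n, x i =
      if T ≤ (i : ℕ) then 1 else -(∑ a : ι, z a * A i (a : Fin n)) := fun _ => rfl
  have hTface : n - (n - l) + (n - m) = T := by omega
  have hxbound : ∀ i : Fin n, |x i| ≤ 1 := by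
    intro i
    rw [hxval]
    by_cases h : T ≤ (i : ℕ)
    · rw [if_pos h]; norm_num
    · rw [if_neg h, abs_neg]
      calc |∑ a : ι, z a * A i (a : Fin n)| ≤ ∑ a : ι, |z a * A i (a : Fin n)| :=
            Finset.abs_sum_le_sum_abs _ _
        _ ≤ ∑ _a : ι, 2 * k' * ε := by
            apply Finset.sum_le_sum
            intro a _
            rw [abs_mul]
            calc |z a| * |A i (a : Fin n)| ≤ (2 * k' * ε) * 1 :=
                  mul_le_mul (hzb a) (entry_abs_le_one g i a) (abs_nonneg _) (by positivity)
              _ = 2 * k' * ε := by ring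
        _ = (Finset.univ : Finset ι).card * (2 * k' * ε) := by
            rw [Finset.sum_const, nsmul_eq_mul]
        _ ≤ l * (2 * k' * ε) := by
            apply mul_le_mul_of_nonneg_right _ (by positivity)
            exact_mod_cast hιcard
        _ = 1 := by rw [← hnum2]; ring
  have hface : x ∈ cubeFace n (n - (n - l) + (n - m)) := by
    constructor
    · intro i _
      exact hxbound i
    · intro i hi
      rw [hTface] at hi
      rw [hxval, if_pos hi]
  -- orthogonality to the last l columns
  have horth : ∀ b : ι, ∑ r : Fin n, A r (b : Fin n) * x r = 0 := by
    intro b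
    rw [← Finset.sum_filter_add_sum_filter_not Finset.univ (fun r : Fin n => T ≤ (r : ℕ))
      (fun r => A r (b : Fin n) * x r)]
    have hfirst : ∑ r ∈ Finset.univ.filter (fun r : Fin n => T ≤ (r : ℕ)),
        A r (b : Fin n) * x r = cv b := by
      rw [hcv]
      rw [← hS]
      apply Finset.sum_congr rfl
      intro r hr
      simp only [hS, Finset.mem_filter] at hr
      rw [hxval, if_pos hr.2, mul_one]
    have hsecond : ∑ r ∈ Finset.univ.filter (fun r : Fin n => ¬ T ≤ (r : ℕ)),
        A r (b : Fin n) * x r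
        = -(∑ a : ι, z a * ((if (a : Fin n) = (b : Fin n) then (1:ℝ) else 0) - B a b)) := by
      have hstep : ∀ r ∈ Finset.univ.filter (fun r : Fin n => ¬ T ≤ (r : ℕ)),
          A r (b : Fin n) * x r = -(∑ a : ι, z a * (A r (a : Fin n) * A r (b : Fin n))) := by
        intro r hr
        simp only [Finset.mem_filter] at hr
        rw [hxval, if_neg hr.2, mul_neg, neg_inj, Finset.mul_sum]
        apply Finset.sum_congr rfl
        intro a _
        ring
      rw [Finset.sum_congr rfl hstep, Finset.sum_neg_distrib, neg_inj, Finset.sum_comm]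
      apply Finset.sum_congr rfl
      intro a _
      rw [← Finset.mul_sum]
      congr 1
      have hsplit := Finset.sum_filter_add_sum_filter_not Finset.univ
        (fun r : Fin n => T ≤ (r : ℕ)) (fun r => A r (a : Fin n) * A r (b : Fin n))
      have hco := colOrtho g (a : Fin n) (b : Fin n)
      have hBab : B a b = ∑ i ∈ S, A i (a : Fin n) * A i (b : Fin n) := rfl
      rw [hS] at hBab
      linarith [hsplit, hco, hBab]
    rw [hfirst, hsecond]
    have hzcv := congrFun hz b
    rw [hfapp] at hzcv
    have h1 : ∑ a : ι, z a * ((if (a : Fin n) = (b : Fin n) then (1:ℝ) else 0) - B a b)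
        = z b - ∑ a : ι, B a b * z a := by
      have hif : ∀ a : ι, (if (a : Fin n) = (b : Fin n) then (1:ℝ) else 0)
          = if a = b then (1:ℝ) else 0 := by
        intro a
        by_cases h : a = b
        · rw [if_pos h, if_pos (by rw [h])]
        · rw [if_neg h, if_neg (fun hh => h (Subtype.ext hh))]
      simp only [hif, mul_sub, mul_ite, mul_one, mul_zero]
      rw [Finset.sum_sub_distrib]
      congr 1
      · rw [Finset.sum_ite_eq' Finset.univ b z, if_pos (Finset.mem_univ b)]
      · exact Finset.sum_congr rfl (fun a _ => mul_comm _ _)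
    rw [h1]
    linarith
  -- the preimage point t
  set t : EuclideanSpace ℝ (Fin n) := WithLp.toLp 2 (fun cc : Fin n => ∑ r : Fin n, A r cc * x r) with htdef
  have htEk : t ∈ Ek n (n - l) := by
    intro cc hcc
    exact horth ⟨cc, hcc⟩
  have hact : act g t = x := by
    ext i
    rw [act_apply]
    calc ∑ c : Fin n, A i c * t c
        = ∑ c : Fin n, ∑ r : Fin n, A i c * (A r c * x r) := by
          apply Finset.sum_congr rfl
          intro c _
          show A i c * (∑ r : Fin n, A r c * x r) = _
          rw [Finset.mul_sum]
      _ = ∑ r : Fin n, ∑ c : Fin n, A i c * (A r c * x r) := Finset.sum_comm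
      _ = ∑ r : Fin n, (∑ c : Fin n, A i c * A r c) * x r := by
          apply Finset.sum_congr rfl
          intro r _
          rw [Finset.sum_mul]
          apply Finset.sum_congr rfl
          intro c _
          ring
      _ = ∑ r : Fin n, (if i = r then (1:ℝ) else 0) * x r := by
          apply Finset.sum_congr rfl
          intro r _
          rw [rowOrtho g i r]
      _ = x i := by
          simp [ite_mul]
  exact ⟨x, ⟨t, htEk, hact⟩, hface⟩

lemma card_filter_ge_le (n a : ℕ) :
    (Finset.univ.filter (fun i : Fin n => a ≤ (i : ℕ))).card ≤ n - a := by
  have h := Finset.card_le_card_of_injOn (fun i : Fin n => (i : ℕ) - a)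
    (s := Finset.univ.filter (fun i : Fin n => a ≤ (i : ℕ))) (t := Finset.range (n - a))
    (by
      intro i hi
      simp only [Finset.mem_coe, Finset.mem_filter, Finset.mem_univ, true_and] at hi
      simp only [Finset.mem_coe, Finset.mem_range]
      have := i.isLt
      omega)
    (by
      intro i hi j hj hij
      simp only [Finset.mem_coe, Finset.mem_filter, Finset.mem_univ, true_and] at hi hj
      have hij' : (i : ℕ) - a = (j : ℕ) - a := hij
      apply Fin.ext
      omega)
  simpa using h

lemma event_lb {l m : ℕ} (hl : 1 ≤ l) (hlm : l < m) {n : ℕ} (hmn : m ≤ n)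
    (H : Measure (OG n)) [IsProbabilityMeasure H] [H.IsMulLeftInvariant] :
    1 - (((m - l : ℕ) : ℝ) * l * (2 * l * ((m - l : ℕ) : ℝ)) ^ 2) / n
      ≤ (H {g : OG n |
          (act g '' Ek n (n - l) ∩ cubeFace n (n - (n - l) + (n - m))).Nonempty}).toReal := by
  classical
  have hn : 0 < n := by omega
  set k' : ℕ := m - l with hk'
  have hk1 : 1 ≤ k' := by omega
  have hl0 : (0:ℝ) < l := by exact_mod_cast hl
  have hk0 : (0:ℝ) < k' := by exact_mod_cast hk1
  set ε : ℝ := 1 / (2 * l * (k' : ℝ)) with hε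
  have hε0 : 0 < ε := by positivity
  set E : Set (OG n) :=
    {g : OG n | (act g '' Ek n (n - l) ∩ cubeFace n (n - (n - l) + (n - m))).Nonempty} with hE
  set A : Set (OG n) :=
    ⋂ (i : Fin n), ⋂ (c : Fin n),
      {g : OG n | n - k' ≤ (i : ℕ) → n - l ≤ (c : ℕ) →
        |(g : Matrix (Fin n) (Fin n) ℝ) i c| ≤ ε} with hAdef
  have hmA : MeasurableSet A := by
    refine MeasurableSet.iInter fun i => MeasurableSet.iInter fun c => ?_
    by_cases h1 : n - k' ≤ (i : ℕ)
    · by_cases h2 : n - l ≤ (c : ℕ)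
      · have : {g : OG n | n - k' ≤ (i : ℕ) → n - l ≤ (c : ℕ) →
            |(g : Matrix (Fin n) (Fin n) ℝ) i c| ≤ ε}
            = {g : OG n | |(g : Matrix (Fin n) (Fin n) ℝ) i c| ≤ ε} := by
          ext g; simp [h1, h2]
        rw [this]
        exact measurableSet_le ((entry_continuous i c).abs.measurable) measurable_const
      · have : {g : OG n | n - k' ≤ (i : ℕ) → n - l ≤ (c : ℕ) →
            |(g : Matrix (Fin n) (Fin n) ℝ) i c| ≤ ε} = Set.univ := by
          ext g; simp [h2]
        rw [this]; exact MeasurableSet.univ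
    · have : {g : OG n | n - k' ≤ (i : ℕ) → n - l ≤ (c : ℕ) →
          |(g : Matrix (Fin n) (Fin n) ℝ) i c| ≤ ε} = Set.univ := by
        ext g; simp [h1]
      rw [this]; exact MeasurableSet.univ
  have hAE : A ⊆ E := by
    intro g hg
    simp only [hAdef, Set.mem_iInter, Set.mem_setOf_eq] at hg
    exact good_subset hl hlm hmn g (fun i c h1 h2 => hg i c h1 h2)
  -- bound on the complement
  set S : Finset (Fin n) := Finset.univ.filter (fun i : Fin n => n - k' ≤ (i : ℕ)) with hS
  set Cf : Finset (Fin n) := Finset.univ.filter (fun c : Fin n => n - l ≤ (c : ℕ)) with hCf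
  have hScard : S.card ≤ k' := by
    have := card_filter_ge_le n (n - k')
    rw [← hS] at this
    have h2 : n - (n - k') = k' := by omega
    omega
  have hCcard : Cf.card ≤ l := by
    have := card_filter_ge_le n (n - l)
    rw [← hCf] at this
    have h2 : n - (n - l) = l := by omega
    omega
  have hsub : Aᶜ ⊆ ⋃ i ∈ S, ⋃ c ∈ Cf, {g : OG n | ε ≤ |(g : Matrix (Fin n) (Fin n) ℝ) i c|} := by
    intro g hg
    simp only [hAdef, Set.mem_compl_iff, Set.mem_iInter, Set.mem_setOf_eq, not_forall] at hg
    obtain ⟨i, c, h1, h2, h3⟩ := hg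
    have hiS : i ∈ S := by simp only [hS, Finset.mem_filter, Finset.mem_univ, true_and]; exact h1
    have hcC : c ∈ Cf := by simp only [hCf, Finset.mem_filter, Finset.mem_univ, true_and]; exact h2
    exact Set.mem_biUnion hiS (Set.mem_biUnion hcC (le_of_lt (lt_of_not_ge h3)))
  have hperband : ∀ i c : Fin n,
      H {g : OG n | ε ≤ |(g : Matrix (Fin n) (Fin n) ℝ) i c|}
        ≤ ENNReal.ofReal ((1 / ε ^ 2) / n) :=
    fun i c => entry_large_meas hn H i c hε0
  have hcompl : H Aᶜ ≤ ENNReal.ofReal ((k' * l * (1 / ε ^ 2)) / n) := by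
    calc H Aᶜ ≤ H (⋃ i ∈ S, ⋃ c ∈ Cf,
        {g : OG n | ε ≤ |(g : Matrix (Fin n) (Fin n) ℝ) i c|}) := measure_mono hsub
      _ ≤ ∑ i ∈ S, H (⋃ c ∈ Cf,
          {g : OG n | ε ≤ |(g : Matrix (Fin n) (Fin n) ℝ) i c|}) := measure_biUnion_finset_le _ _
      _ ≤ ∑ _i ∈ S, ∑ _c ∈ Cf, ENNReal.ofReal ((1 / ε ^ 2) / n) := by
          apply Finset.sum_le_sum
          intro i _
          calc H (⋃ c ∈ Cf, {g : OG n | ε ≤ |(g : Matrix (Fin n) (Fin n) ℝ) i c|})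
              ≤ ∑ c ∈ Cf, H {g : OG n | ε ≤ |(g : Matrix (Fin n) (Fin n) ℝ) i c|} :=
                measure_biUnion_finset_le _ _
            _ ≤ ∑ _c ∈ Cf, ENNReal.ofReal ((1 / ε ^ 2) / n) :=
                Finset.sum_le_sum (fun c _ => hperband i c)
      _ = (S.card : ENNReal) * ((Cf.card : ENNReal) * ENNReal.ofReal ((1 / ε ^ 2) / n)) := by
          simp [Finset.sum_const, nsmul_eq_mul, mul_assoc]
      _ ≤ (k' : ENNReal) * ((l : ENNReal) * ENNReal.ofReal ((1 / ε ^ 2) / n)) := by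
          apply mul_le_mul' (by exact_mod_cast hScard)
          exact mul_le_mul' (by exact_mod_cast hCcard) le_rfl
      _ = ENNReal.ofReal ((k' * l * (1 / ε ^ 2)) / n) := by
          rw [← ENNReal.ofReal_natCast k', ← ENNReal.ofReal_natCast l,
            ← ENNReal.ofReal_mul (by positivity), ← ENNReal.ofReal_mul (by positivity)]
          congr 1
          ring
  have hcomplR : (H Aᶜ).toReal ≤ (k' * l * (1 / ε ^ 2)) / n :=
    ENNReal.toReal_le_of_le_ofReal (by positivity) hcompl
  have hsplit : (H A).toReal = 1 - (H Aᶜ).toReal := by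
    have h := measure_add_measure_compl hmA (μ := H)
    have h1 : (H A).toReal + (H Aᶜ).toReal = 1 := by
      rw [← ENNReal.toReal_add (measure_ne_top H A) (measure_ne_top H Aᶜ), h]
      simp
    linarith
  have hAle : (H A).toReal ≤ (H E).toReal :=
    ENNReal.toReal_mono (measure_ne_top H E) (measure_mono hAE)
  have hεval : 1 / ε ^ 2 = (2 * l * (k' : ℝ)) ^ 2 := by
    rw [hε]
    rw [div_pow, one_pow, one_div_one_div]
  calc 1 - (((m - l : ℕ) : ℝ) * l * (2 * l * ((m - l : ℕ) : ℝ)) ^ 2) / n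
      = 1 - (k' * l * (1 / ε ^ 2)) / n := by rw [hεval, ← hk']
    _ ≤ 1 - (H Aᶜ).toReal := by linarith
    _ = (H A).toReal := hsplit.symm
    _ ≤ (H E).toReal := hAle

lemma choose_factorial_lim (k' : ℕ) :
    Tendsto (fun n : ℕ => ((n.choose k' : ℝ) * (Nat.factorial k' : ℝ)) / (n : ℝ) ^ k')
      atTop (nhds 1) := by
  have hfac : ∀ i : ℕ, i ∈ Finset.range k' →
      Tendsto (fun n : ℕ => ((n : ℝ) - i) / n) atTop (nhds 1) := by
    intro i _
    have h0 : Tendsto (fun n : ℕ => 1 - (i : ℝ) / n) atTop (nhds 1) := by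
      have h := tendsto_const_div_atTop_nhds_zero_nat (i : ℝ)
      have h2 := (tendsto_const_nhds (x := (1:ℝ)) (f := atTop)).sub h
      simpa using h2
    apply h0.congr'
    filter_upwards [eventually_ge_atTop 1] with n hn
    have hn0 : (n : ℝ) ≠ 0 := by positivity
    field_simp
  have hprod : Tendsto (fun n : ℕ => ∏ i ∈ Finset.range k', (((n : ℝ) - i) / n))
      atTop (nhds (∏ _i ∈ Finset.range k', (1 : ℝ))) := tendsto_finset_prod _ hfac
  rw [Finset.prod_const, one_pow] at hprod
  apply hprod.congr'
  filter_upwards [eventually_ge_atTop (max k' 1)] with n hn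
  have hk : k' ≤ n := le_trans (le_max_left _ _) hn
  have hn1 : 1 ≤ n := le_trans (le_max_right _ _) hn
  have hn0 : (n : ℝ) ≠ 0 := by positivity
  rw [Finset.prod_div_distrib, Finset.prod_const, Finset.card_range]
  have hcast : ∏ i ∈ Finset.range k', ((n : ℝ) - i) = ((n.descFactorial k' : ℕ) : ℝ) := by
    rw [Nat.descFactorial_eq_prod_range, Nat.cast_prod]
    apply Finset.prod_congr rfl
    intro i hi
    simp only [Finset.mem_range] at hi
    rw [Nat.cast_sub (by omega)]
  rw [hcast]
  have hdesc : n.descFactorial k' = Nat.factorial k' * n.choose k' :=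
    Nat.descFactorial_eq_factorial_mul_choose n k'
  rw [hdesc]
  push_cast
  ring


/-- for fixed `1 ≤ l < m`, `f(n-m, n-l, n) ∼ (2n)^{m-l}/(m-l)!` as `n → ∞`. -/
theorem codim_faces_asymptotics (l m : ℕ) (hl : 1 ≤ l) (hlm : l < m)
    (H : ∀ n, Measure (OG n))
    (hHaar : ∀ n, (H n).IsHaarMeasure) (hProb : ∀ n, IsProbabilityMeasure (H n)) :
    Tendsto (fun n : ℕ =>
        expFaces n (H n) (n - m) (n - l) * (Nat.factorial (m - l)) / (2 * n : ℝ) ^ (m - l))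
      atTop (nhds 1) := by
  set k' : ℕ := m - l with hk'
  have hk1 : 1 ≤ k' := by omega
  set E : ∀ n : ℕ, Set (OG n) := fun n =>
    {g : OG n | (act g '' Ek n (n - l) ∩ cubeFace n (n - (n - l) + (n - m))).Nonempty} with hE
  set q : ℕ → ℝ := fun n => ((H n) (E n)).toReal with hq
  set C₀ : ℝ := (k' : ℝ) * l * (2 * l * (k' : ℝ)) ^ 2 with hC
  have hq1 : ∀ n, q n ≤ 1 := by
    intro n
    haveI := hProb n
    exact ENNReal.toReal_le_of_le_ofReal zero_le_one (by simpa using prob_le_one (μ := H n))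
  have hql : ∀ n, m ≤ n → 1 - C₀ / n ≤ q n := by
    intro n hmn
    haveI := hProb n
    haveI : (H n).IsMulLeftInvariant := (hHaar n).toIsMulLeftInvariant
    exact event_lb hl hlm hmn (H n)
  have hqlim : Tendsto q atTop (nhds 1) := by
    have h1 : Tendsto (fun n : ℕ => 1 - C₀ / n) atTop (nhds 1) := by
      have h := tendsto_const_div_atTop_nhds_zero_nat C₀
      have h2 := (tendsto_const_nhds (x := (1:ℝ)) (f := atTop)).sub h
      simpa using h2
    refine tendsto_of_tendsto_of_tendsto_of_le_of_le' h1 tendsto_const_nhds ?_ ?_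
    · filter_upwards [eventually_ge_atTop m] with n hn
      exact hql n hn
    · filter_upwards with n
      exact hq1 n
  have hmain : Tendsto (fun n : ℕ =>
      (((n.choose k' : ℝ) * (Nat.factorial k' : ℝ)) / (n : ℝ) ^ k') * q n) atTop (nhds 1) := by
    have := (choose_factorial_lim k').mul hqlim
    simpa using this
  apply hmain.congr'
  filter_upwards [eventually_ge_atTop m, eventually_ge_atTop 1] with n hmn hn1
  have hkk : (n - l) - (n - m) = k' := by omega
  have hn0 : (n : ℝ) ≠ 0 := by positivity
  show ((n.choose k' : ℝ) * (Nat.factorial k' : ℝ)) / (n : ℝ) ^ k' * q n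
      = expFaces n (H n) (n - m) (n - l) * (Nat.factorial (m - l)) / (2 * n : ℝ) ^ (m - l)
  rw [expFaces, hkk, ← hk']
  have hset : (H n) {g | (act g '' Ek n (n - l) ∩ cubeFace n (n - (n - l) + (n - m))).Nonempty}
      = (H n) (E n) := rfl
  rw [hset]
  rw [mul_pow]
  have h2k : (2 : ℝ) ^ k' ≠ 0 := by positivity
  have hnk : (n : ℝ) ^ k' ≠ 0 := pow_ne_zero _ hn0
  field_simp [hq]
  ring
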